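/- The function φ(W) = Σ_{j=1}^M (w_j⁴ − (3M/(M+2))·(r²/M)²) restricted to the sphere |W|² = r² is an eigenfunction of the Kac collision operator L_M with eigenvalue −Δ_M where Δ_M = (1/2)·(M+2)/(M−1). -/

import Mathlib

/-!
Only the pair `(w_j, w_k)` moves under `R_{jk}(θ)`, and over a full rotation the average
of `x⁴ + y⁴` is `¾ (w_j² + w_k²)²`. Summing over pairs, `L_M` maps `Σ w_j⁴` to a combination
of `Σ w_j⁴` and `(Σ w_j²)² = r⁴`; the constant in `φ` is the one that absorbs the `r⁴` term.
-/

open MeasureTheory Real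

/-- Rotation of the coordinate pair `(w_j, w_k)` by angle `θ`. -/
noncomputable def kacRot {M : ℕ} (j k : Fin M) (θ : ℝ) (W : Fin M → ℝ) : Fin M → ℝ :=
  fun i => if i = j then Real.cos θ * W j - Real.sin θ * W k
    else if i = k then Real.sin θ * W j + Real.cos θ * W k
    else W i

/-- The Kac collision operator
`L_M F(W) = (2/(M−1)) Σ_{1≤j<k≤M} ∫₀^{2π} (F(R_{jk}(θ)W) − F(W)) dθ/(2π)`. -/
noncomputable def kacL (M : ℕ) (F : (Fin M → ℝ) → ℝ) (W : Fin M → ℝ) : ℝ :=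
  (2 / ((M : ℝ) - 1)) * ∑ j : Fin M, ∑ k : Fin M,
    if j < k then (∫ θ in (0 : ℝ)..(2 * π), (F (kacRot j k θ W) - F W)) / (2 * π) else 0

open Finset

section Rotation

variable {M : ℕ} (j k : Fin M) (θ : ℝ) (W : Fin M → ℝ)

lemma kacRot_apply_left : kacRot j k θ W j = cos θ * W j - sin θ * W k := by
  simp [kacRot]

lemma kacRot_apply_right (hjk : j ≠ k) : kacRot j k θ W k = sin θ * W j + cos θ * W k := by
  simp [kacRot, hjk.symm]

lemma kacRot_apply_of_ne {i : Fin M} (hij : i ≠ j) (hik : i ≠ k) : kacRot j k θ W i = W i := by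
  simp [kacRot, hij, hik]

lemma sum_comp_kacRot_sub_sum (f : ℝ → ℝ) (hjk : j ≠ k) :
    ∑ i, f (kacRot j k θ W i) - ∑ i, f (W i)
      = f (cos θ * W j - sin θ * W k) + f (sin θ * W j + cos θ * W k) - f (W j) - f (W k) := by
  rw [← sum_sub_distrib, ← sum_subset (subset_univ {j, k}), sum_pair hjk,
    kacRot_apply_left, kacRot_apply_right j k θ W hjk]
  · ring
  · intro i _ hi
    simp only [mem_insert, mem_singleton, not_or] at hi
    rw [kacRot_apply_of_ne j k θ W hi.1 hi.2, sub_self]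

end Rotation

/-- Writing `x + iy = e^{iθ}(a + ib)`, this is `x⁴ + y⁴ = ¾ |x + iy|⁴ + ¼ Re (x + iy)⁴`. -/
lemma rotate_pow_four_add_rotate_pow_four (a b θ : ℝ) :
    (cos θ * a - sin θ * b) ^ 4 + (sin θ * a + cos θ * b) ^ 4
      = 3 / 4 * (a ^ 2 + b ^ 2) ^ 2 + 1 / 4 * (a ^ 4 - 6 * a ^ 2 * b ^ 2 + b ^ 4) * cos (4 * θ)
        + (a * b ^ 3 - a ^ 3 * b) * sin (4 * θ) := by
  rw [show 4 * θ = 2 * (2 * θ) by ring]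
  simp only [cos_two_mul, sin_two_mul]
  set s := sin θ
  set c := cos θ
  linear_combination (a ^ 4 + b ^ 4 + (a ^ 4 + b ^ 4) * s ^ 2 - (a ^ 4 + b ^ 4) * c ^ 2
    + 12 * a ^ 2 * b ^ 2 * c ^ 2 + 4 * (a ^ 3 * b - a * b ^ 3) * s * c) * sin_sq_add_cos_sq θ

lemma integral_cos_nat_mul {n : ℕ} (hn : n ≠ 0) : ∫ θ in (0 : ℝ)..2 * π, cos (n * θ) = 0 := by
  rw [intervalIntegral.integral_comp_mul_left cos (Nat.cast_ne_zero.2 hn), integral_cos,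
    mul_zero, sin_periodic.nat_mul_eq, sub_self, smul_zero]

lemma integral_sin_nat_mul {n : ℕ} (hn : n ≠ 0) : ∫ θ in (0 : ℝ)..2 * π, sin (n * θ) = 0 := by
  rw [intervalIntegral.integral_comp_mul_left sin (Nat.cast_ne_zero.2 hn), integral_sin,
    mul_zero, cos_periodic.nat_mul_eq, sub_self, smul_zero]

lemma integral_rotate_pow_four_add_rotate_pow_four (a b : ℝ) :
    ∫ θ in (0 : ℝ)..2 * π, ((cos θ * a - sin θ * b) ^ 4 + (sin θ * a + cos θ * b) ^ 4)
      = 2 * π * (3 / 4 * (a ^ 2 + b ^ 2) ^ 2) := by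
  have hcos : ∫ θ in (0 : ℝ)..2 * π, cos (4 * θ) = 0 := by
    exact_mod_cast integral_cos_nat_mul (n := 4) (by norm_num)
  have hsin : ∫ θ in (0 : ℝ)..2 * π, sin (4 * θ) = 0 := by
    exact_mod_cast integral_sin_nat_mul (n := 4) (by norm_num)
  simp_rw [rotate_pow_four_add_rotate_pow_four]
  rw [intervalIntegral.integral_add, intervalIntegral.integral_add,
    intervalIntegral.integral_const, intervalIntegral.integral_const_mul,
    intervalIntegral.integral_const_mul, hcos, hsin]
  · simp
  all_goals exact Continuous.intervalIntegrable (by fun_prop) _ _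

lemma sum_sum_eq_two_nsmul_sum_sum_lt_add_sum_diag {ι R : Type*} [Fintype ι] [LinearOrder ι]
    [AddCommMonoid R] (g : ι → ι → R) (hg : ∀ j k, g j k = g k j) :
    ∑ j, ∑ k, g j k = 2 • ∑ j, ∑ k, (if j < k then g j k else 0) + ∑ j, g j j := by
  have hsplit : ∀ j k, g j k = (if j < k then g j k else 0) + (if k < j then g k j else 0)
      + if j = k then g j k else 0 := by
    intro j k
    rcases lt_trichotomy j k with h | rfl | h
    · simp [h, h.ne, h.not_gt]
    · simp
    · simp [h, h.ne', h.not_gt, hg j k]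
  rw [sum_congr rfl fun j _ => sum_congr rfl fun k _ => hsplit j k]
  simp only [sum_add_distrib, sum_ite_eq, mem_univ, if_true]
  rw [sum_comm (f := fun j k => if k < j then g k j else 0), two_nsmul]

lemma two_mul_sum_sum_lt_quartic {ι : Type*} [Fintype ι] [LinearOrder ι] (W : ι → ℝ) :
    2 * ∑ j, ∑ k, (if j < k then 3 / 4 * (W j ^ 2 + W k ^ 2) ^ 2 - W j ^ 4 - W k ^ 4 else 0)
      = 3 / 2 * (∑ i, W i ^ 2) ^ 2 - (Fintype.card ι + 2) / 2 * ∑ i, W i ^ 4 := by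
  have h := sum_sum_eq_two_nsmul_sum_sum_lt_add_sum_diag
    (fun j k => 3 / 4 * (W j ^ 2 + W k ^ 2) ^ 2 - W j ^ 4 - W k ^ 4) (fun j k => by ring)
  have hfull : ∑ j, ∑ k, (3 / 4 * (W j ^ 2 + W k ^ 2) ^ 2 - W j ^ 4 - W k ^ 4)
      = 3 / 2 * (∑ i, W i ^ 2) ^ 2 - Fintype.card ι / 2 * ∑ i, W i ^ 4 :=
    calc _ = ∑ j, ∑ k,
          (-(1 / 4) * W j ^ 4 + (-(1 / 4) * W k ^ 4 + 3 / 2 * W j ^ 2 * W k ^ 2)) := by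
          congr! 2 with j - k -; ring
      _ = _ := by
          simp only [sum_add_distrib, ← mul_sum, ← sum_mul, sum_const, card_univ, nsmul_eq_mul]
          ring
  have hdiag : ∑ j, (3 / 4 * (W j ^ 2 + W j ^ 2) ^ 2 - W j ^ 4 - W j ^ 4) = ∑ j, W j ^ 4 :=
    sum_congr rfl fun j _ => by ring
  rw [hfull, hdiag, nsmul_eq_mul] at h
  linear_combination -h

lemma integral_sum_pow_four_sub_const_kacRot_sub_div_two_pi {M : ℕ} {j k : Fin M} (hjk : j ≠ k)
    (C : ℝ) (W : Fin M → ℝ) :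
    (∫ θ in (0 : ℝ)..2 * π, (∑ i, (kacRot j k θ W i ^ 4 - C) - ∑ i, (W i ^ 4 - C))) / (2 * π)
      = 3 / 4 * (W j ^ 2 + W k ^ 2) ^ 2 - W j ^ 4 - W k ^ 4 := by
  have hdiff : ∀ θ, ∑ i, (kacRot j k θ W i ^ 4 - C) - ∑ i, (W i ^ 4 - C)
      = (cos θ * W j - sin θ * W k) ^ 4 + (sin θ * W j + cos θ * W k) ^ 4
        - (W j ^ 4 + W k ^ 4) := fun θ => by
    rw [sum_comp_kacRot_sub_sum j k θ W (· ^ 4 - C) hjk]; ring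
  simp only [hdiff]
  rw [intervalIntegral.integral_sub (Continuous.intervalIntegrable (by fun_prop) _ _)
    intervalIntegrable_const, integral_rotate_pow_four_add_rotate_pow_four,
    intervalIntegral.integral_const, smul_eq_mul]
  field_simp
  ring

lemma kacL_sum_pow_four_sub_const (M : ℕ) (C : ℝ) (W : Fin M → ℝ) :
    kacL M (fun V => ∑ i, (V i ^ 4 - C)) W
      = (3 / 2 * (∑ i, W i ^ 2) ^ 2 - ((M : ℝ) + 2) / 2 * ∑ i, W i ^ 4) / ((M : ℝ) - 1) := by
  have hpairs : ∀ j k : Fin M,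
      (if j < k then (∫ θ in (0 : ℝ)..2 * π,
          (∑ i, (kacRot j k θ W i ^ 4 - C) - ∑ i, (W i ^ 4 - C))) / (2 * π) else 0)
        = if j < k then 3 / 4 * (W j ^ 2 + W k ^ 2) ^ 2 - W j ^ 4 - W k ^ 4 else 0 := by
    intro j k
    split_ifs with hjk
    exacts [integral_sum_pow_four_sub_const_kacRot_sub_div_two_pi hjk.ne C W, rfl]
  have htwice := two_mul_sum_sum_lt_quartic W
  rw [Fintype.card_fin] at htwice
  rw [kacL, sum_congr rfl fun j _ => sum_congr rfl fun k _ => hpairs j k, ← htwice]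
  ring

theorem kac_eigenfunction_general (M : ℕ) (hM : 2 ≤ M) (r : ℝ)
    (φ : (Fin M → ℝ) → ℝ)
    (hφ : φ = fun W => ∑ j : Fin M, (W j ^ 4 - (3 * M / ((M : ℝ) + 2)) * (r ^ 2 / M) ^ 2))
    (W : Fin M → ℝ) (hW : ∑ i : Fin M, W i ^ 2 = r ^ 2) :
    kacL M φ W = -((1 / 2) * ((M : ℝ) + 2) / ((M : ℝ) - 1)) * φ W := by
  have hM2 : (2 : ℝ) ≤ M := by exact_mod_cast hM
  have hM1 : (M : ℝ) - 1 ≠ 0 := by linarith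
  have hM0 : (M : ℝ) ≠ 0 := by linarith
  subst hφ
  rw [kacL_sum_pow_four_sub_const, hW]
  simp only [sum_sub_distrib, sum_const, card_univ, Fintype.card_fin, nsmul_eq_mul]
  field_simp
  ring

/-- The function `φ(W) = Σ_{j=1}^M (w_j⁴ − (3M/(M+2))·(r²/M)²)`, restricted to the sphere
`|W|² = r²`, is an eigenfunction of the Kac operator `L_M` with eigenvalue `−Δ_M`,
where `Δ_M = (1/2)(M+2)/(M−1)`. -/
theorem kac_eigenfunction (M : ℕ) (hM : 2 ≤ M) (r : ℝ) (hr : 0 < r)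
    (φ : (Fin M → ℝ) → ℝ)
    (hφ : φ = fun W => ∑ j : Fin M, (W j ^ 4 - (3 * M / ((M : ℝ) + 2)) * (r ^ 2 / M) ^ 2))
    (W : Fin M → ℝ) (hW : ∑ i : Fin M, W i ^ 2 = r ^ 2) :
    kacL M φ W = -((1 / 2) * ((M : ℝ) + 2) / ((M : ℝ) - 1)) * φ W :=
  kac_eigenfunction_general M hM r φ hφ W hW
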